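/- Suppose a quantizer Q : Fin M → Fin K attains e_Q = ∑_{j ∈ Fin M} max_{i ∈ Fin N} p i j. Then for every k ∈ Fin K there exists an index i_k ∈ Fin N such that p i_k j = max_{i ∈ Fin N} p i j for every j with Q j = k. (Paper's Theorem 3(a), converse: any quantizer producing e^max must have the maximum-likelihood structure, i.e., each cell is served by a single maximizing row index.) -/

import Mathlib

/-!
Cell by cell, `max_i ∑_{j ∈ cell} p i j ≤ ∑_{j ∈ cell} max_i p i j`, and summing over the cells
gives `e_Q ≤ ∑_j max_i p i j`. Equality of the totals therefore forces equality in every cell, and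
then a row attaining the maximum of the cell sum attains the column maximum in each column of the
cell, since a sum of nonnegative gaps vanishes only if every gap does.
-/

open Finset

/-- The maximum of a real-valued vector over the finite index set `Fin N` (`N > 0`). -/
noncomputable def colMax {N : ℕ} (hN : 0 < N) (v : Fin N → ℝ) : ℝ :=
  Finset.univ.sup' (Finset.univ_nonempty_iff.mpr ⟨⟨0, hN⟩⟩) v

/-- The value `e_Q` induced by a quantizer `Q : Fin M → Fin K` on a joint matrix `p`:
`e_Q = ∑_k max_i ∑_{j : Q j = k} p i j`. -/
noncomputable def eQ {N M K : ℕ} (hN : 0 < N) (p : Fin N → Fin M → ℝ)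
    (Q : Fin M → Fin K) : ℝ :=
  ∑ k, colMax hN (fun i => ∑ j ∈ Finset.univ.filter (fun j => Q j = k), p i j)

section SupSum

variable {ι κ β : Type*} [AddCommMonoid β] [LinearOrder β]
  {s : Finset ι} (hs : s.Nonempty) {t : Finset κ} {f : ι → κ → β}

theorem Finset.sup'_sum_le_sum_sup' [IsOrderedAddMonoid β] :
    s.sup' hs (fun i => ∑ j ∈ t, f i j) ≤ ∑ j ∈ t, s.sup' hs (fun i => f i j) :=
  sup'_le hs _ fun _ hi => sum_le_sum fun j _ => le_sup' (fun i => f i j) hi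

theorem Finset.eq_sup'_of_sum_eq_sum_sup' [IsOrderedCancelAddMonoid β] {i : ι} (hi : i ∈ s)
    (h : ∑ j ∈ t, f i j = ∑ j ∈ t, s.sup' hs (fun i => f i j)) {j : κ} (hj : j ∈ t) :
    f i j = s.sup' hs (fun i => f i j) :=
  (sum_eq_sum_iff_of_le fun j _ => le_sup' (fun i => f i j) hi).mp h j hj

end SupSum

theorem colMax_cell_eq_of_eQ_eq {N M K : ℕ} (hN : 0 < N) {p : Fin N → Fin M → ℝ}
    {Q : Fin M → Fin K} (h : eQ hN p Q = ∑ j, colMax hN (fun i => p i j)) (k : Fin K) :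
    colMax hN (fun i => ∑ j ∈ univ.filter (fun j => Q j = k), p i j) =
      ∑ j ∈ univ.filter (fun j => Q j = k), colMax hN (fun i => p i j) := by
  have h_cells : eQ hN p Q =
      ∑ k, ∑ j ∈ univ.filter (fun j => Q j = k), colMax hN (fun i => p i j) := by
    rw [h, sum_fiberwise]
  exact (sum_eq_sum_iff_of_le fun k _ => sup'_sum_le_sum_sup' _).mp h_cells k (mem_univ k)

theorem emax_quantizer_structure (N M K : ℕ) (hN : 1 ≤ N)
    (p : Fin N → Fin M → ℝ)
    (Q : Fin M → Fin K)
    (hQ : eQ (by omega) p Q = ∑ j, colMax (by omega : 0 < N) (fun i => p i j)) :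
    ∀ k : Fin K, ∃ ik : Fin N, ∀ j : Fin M, Q j = k →
      p ik j = colMax (by omega : 0 < N) (fun i => p i j) := by
  intro k
  obtain ⟨ik, -, hik⟩ := exists_mem_eq_sup' (univ_nonempty_iff.mpr ⟨⟨0, hN⟩⟩)
    (fun i => ∑ j ∈ univ.filter (fun j => Q j = k), p i j)
  exact ⟨ik, fun j hj => eq_sup'_of_sum_eq_sum_sup' _ (mem_univ ik)
    (hik.symm.trans (colMax_cell_eq_of_eQ_eq _ hQ k)) (mem_filter.mpr ⟨mem_univ j, hj⟩)⟩
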